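/- Let M14₁ be the 6-dimensional real Lie algebra with basis x₁,…,x₆ and nonzero brackets [x₁,x₃]=x₄, [x₁,x₄]=x₆, [x₂,x₃]=x₅, [x₂,x₅]=x₆. For ε ∈ {1,−1}, define J_ε by J x₁ = x₂, J x₂ = −x₁, J x₃ = −(1/ε) x₆, J x₆ = ε x₃, J x₄ = x₅, J x₅ = −x₄. Then J_ε² = −1 and J_ε satisfies the Nijenhuis integrability condition for all X,Y ∈ M14₁. -/

import Mathlib

/-!
The Nijenhuis tensor `N` of `J` is skew-symmetric, and when `J² = -1` it satisfies
`N (J X) Y = -J (N X Y)`. Hence `N` vanishes as soon as it vanishes on pairs from a set `S` such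
that `S ∪ J S` spans, and likewise `J² = -1` need only be checked on `S`. For `M14₁` take
`S = {x₁, x₃, x₄}` (`{x 0, x 2, x 3}` with the 0-based indices below), so that
`J S = {x₂, -ε x₆, x₅}`; the three values `N(x₁, x₃)`, `N(x₁, x₄)`, `N(x₃, x₄)` vanish by a
direct computation with the bracket table.
-/

section Nijenhuis

variable {R L : Type*} [CommRing R] [LieRing L] [LieAlgebra R L]

def nijenhuis (J : L →ₗ[R] L) : L →ₗ[R] L →ₗ[R] L :=
  LinearMap.mk₂ R (fun X Y => ⁅J X, J Y⁆ - ⁅X, Y⁆ - J ⁅J X, Y⁆ - J ⁅X, J Y⁆)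
    (fun _ _ _ => by simp only [map_add, add_lie]; abel)
    (fun _ _ _ => by simp only [map_smul, smul_lie, smul_sub])
    (fun _ _ _ => by simp only [map_add, lie_add]; abel)
    (fun _ _ _ => by simp only [map_smul, lie_smul, smul_sub])

variable (J : L →ₗ[R] L)

lemma nijenhuis_apply (X Y : L) :
    nijenhuis J X Y = ⁅J X, J Y⁆ - ⁅X, Y⁆ - J ⁅J X, Y⁆ - J ⁅X, J Y⁆ :=
  rfl

lemma nijenhuis_swap (X Y : L) : nijenhuis J Y X = -nijenhuis J X Y := by
  simp only [nijenhuis_apply, ← lie_skew X, ← lie_skew (J X), map_neg]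
  abel

lemma nijenhuis_self (X : L) : nijenhuis J X X = 0 := by
  simp only [nijenhuis_apply, lie_self, ← lie_skew X (J X), map_neg]
  abel

instance : Std.Symm fun X Y : L => nijenhuis J X Y = 0 :=
  ⟨fun X Y h => by rw [nijenhuis_swap, h, neg_zero]⟩

variable {J}

lemma nijenhuis_apply_left (hJ : ∀ X, J (J X) = -X) (X Y : L) :
    nijenhuis J (J X) Y = -J (nijenhuis J X Y) := by
  simp only [nijenhuis_apply, hJ, map_sub, map_neg, neg_lie]
  abel

lemma nijenhuis_apply_right (hJ : ∀ X, J (J X) = -X) (X Y : L) :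
    nijenhuis J X (J Y) = -J (nijenhuis J X Y) := by
  rw [nijenhuis_swap, nijenhuis_apply_left hJ, nijenhuis_swap J X, map_neg, neg_neg]

end Nijenhuis

section SpanUnionImage

variable {R M : Type*} [CommRing R] [AddCommGroup M] [Module R M] {J : M →ₗ[R] M} {S : Set M}

lemma Submodule.eq_top_of_span_union_image (hS : Submodule.span R (S ∪ J '' S) = ⊤)
    {P : Submodule R M} (hP : ∀ a ∈ S, a ∈ P ∧ J a ∈ P) : P = ⊤ := by
  rw [eq_top_iff, ← hS, Submodule.span_le]
  rintro _ (ha | ⟨a, ha, rfl⟩)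
  exacts [(hP _ ha).1, (hP a ha).2]

lemma apply_apply_eq_neg_of_span_union_image (hS : Submodule.span R (S ∪ J '' S) = ⊤)
    (h : ∀ a ∈ S, J (J a) = -a) (X : M) : J (J X) = -X := by
  have : LinearMap.eqLocus (J ∘ₗ J) (-LinearMap.id) = ⊤ :=
    Submodule.eq_top_of_span_union_image hS fun a ha =>
      ⟨h a ha, by simp [h a ha]⟩
  simpa using this.ge (Submodule.mem_top (x := X))

end SpanUnionImage

lemma nijenhuis_eq_zero_of_span_union_image {R L : Type*} [CommRing R] [LieRing L]
    [LieAlgebra R L] {J : L →ₗ[R] L} {S : Set L} (hJ : ∀ X, J (J X) = -X)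
    (hS : Submodule.span R (S ∪ J '' S) = ⊤)
    (h : S.Pairwise fun a b => nijenhuis J a b = 0) : nijenhuis J = 0 := by
  have hSS : ∀ a ∈ S, ∀ b ∈ S, nijenhuis J a b = 0 := fun a ha b hb =>
    (eq_or_ne a b).elim (fun hab => hab ▸ nijenhuis_self J a) (h ha hb)
  have hleft : ∀ a ∈ S, nijenhuis J a = 0 := fun a ha =>
    LinearMap.ker_eq_top.1 <| Submodule.eq_top_of_span_union_image hS fun b hb =>
      ⟨hSS a ha b hb, by simp [LinearMap.mem_ker, nijenhuis_apply_right hJ, hSS a ha b hb]⟩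
  refine LinearMap.ext fun X => LinearMap.ext fun Y => ?_
  have hY : LinearMap.ker ((nijenhuis J).flip Y) = ⊤ :=
    Submodule.eq_top_of_span_union_image hS fun a ha =>
      ⟨by simp [hleft a ha], by simp [nijenhuis_apply_left hJ, hleft a ha]⟩
  simpa using hY.ge (Submodule.mem_top (x := X))

lemma span_union_image_eq_top_of_fin_six {K M : Type*} [Field K] [AddCommGroup M] [Module K M]
    (x : Module.Basis (Fin 6) K M) {J : M →ₗ[K] M} {c : K} (hJ0 : J (x 0) = x 1)
    (hJ2 : J (x 2) = c • x 5) (hc : c ≠ 0) (hJ3 : J (x 3) = x 4) :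
    Submodule.span K ({x 0, x 2, x 3} ∪ J '' {x 0, x 2, x 3}) = ⊤ := by
  set S : Set M := {x 0, x 2, x 3}
  set P := Submodule.span K (S ∪ J '' S)
  have hS : ∀ a ∈ S, a ∈ P := fun a ha => Submodule.subset_span (Or.inl ha)
  have hJS : ∀ a ∈ S, J a ∈ P := fun a ha => Submodule.subset_span (Or.inr ⟨a, ha, rfl⟩)
  have hx5 : x 5 = c⁻¹ • J (x 2) := by rw [hJ2, smul_smul, inv_mul_cancel₀ hc, one_smul]
  rw [eq_top_iff, ← x.span_eq, Submodule.span_le]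
  rintro _ ⟨i, rfl⟩
  fin_cases i
  · exact hS (x 0) (by simp [S])
  · exact hJ0 ▸ hJS (x 0) (by simp [S])
  · exact hS (x 2) (by simp [S])
  · exact hS (x 3) (by simp [S])
  · exact hJ3 ▸ hJS (x 3) (by simp [S])
  · exact hx5 ▸ P.smul_mem _ (hJS (x 2) (by simp [S]))

theorem M14pos1_Jeps_integrable_general
    (L : Type*) [LieRing L] [LieAlgebra ℝ L]
    (x : Module.Basis (Fin 6) ℝ L)
    (h02 : ⁅x 0, x 2⁆ = x 3) (h03 : ⁅x 0, x 3⁆ = x 5)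
    (h12 : ⁅x 1, x 2⁆ = x 4) (h14 : ⁅x 1, x 4⁆ = x 5)
    (h04 : ⁅x 0, x 4⁆ = 0) (h05 : ⁅x 0, x 5⁆ = 0)
    (h13 : ⁅x 1, x 3⁆ = 0) (h15 : ⁅x 1, x 5⁆ = 0)
    (h23 : ⁅x 2, x 3⁆ = 0) (h24 : ⁅x 2, x 4⁆ = 0)
    (h35 : ⁅x 3, x 5⁆ = 0) (h45 : ⁅x 4, x 5⁆ = 0)
    (ε : ℝ) (hε : ε = 1 ∨ ε = -1)
    (J : L →ₗ[ℝ] L)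
    (hJ0 : J (x 0) = x 1) (hJ1 : J (x 1) = -x 0)
    (hJ2 : J (x 2) = -(1 / ε) • x 5) (hJ5 : J (x 5) = ε • x 2)
    (hJ3 : J (x 3) = x 4) (hJ4 : J (x 4) = -x 3) :
    (∀ X : L, J (J X) = -X) ∧
    (∀ X Y : L, ⁅J X, J Y⁆ - ⁅X, Y⁆ - J ⁅J X, Y⁆ - J ⁅X, J Y⁆ = 0) := by
  have hεε : ε * ε = 1 := by rcases hε with rfl | rfl <;> norm_num
  rw [one_div, inv_eq_of_mul_eq_one_right hεε] at hJ2
  have hε0 : -ε ≠ 0 := neg_ne_zero.2 (left_ne_zero_of_mul_eq_one hεε)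
  have hspan := span_union_image_eq_top_of_fin_six x hJ0 hJ2 hε0 hJ3
  have hJJ : ∀ X, J (J X) = -X := by
    refine apply_apply_eq_neg_of_span_union_image hspan ?_
    rintro a (rfl | rfl | rfl)
    · rw [hJ0, hJ1]
    · rw [hJ2, map_smul, hJ5, smul_smul, neg_mul, hεε, neg_smul, one_smul]
    · rw [hJ3, hJ4]
  have hN02 : nijenhuis J (x 0) (x 2) = 0 := by
    simp [nijenhuis_apply, hJ0, hJ2, h02, h12, h05, h15, hJ4]
  have hN03 : nijenhuis J (x 0) (x 3) = 0 := by
    simp [nijenhuis_apply, hJ0, hJ3, h03, h13, h14, h04]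
  have hN23 : nijenhuis J (x 2) (x 3) = 0 := by
    simp [nijenhuis_apply, hJ2, hJ3, h23, h24, ← lie_skew (x 5), h35, h45]
  have hN : nijenhuis J = 0 := by
    refine nijenhuis_eq_zero_of_span_union_image hJJ hspan ?_
    simp [Set.pairwise_insert_of_symm, hN02, hN03, hN23]
  exact ⟨hJJ, fun X Y => by simpa [nijenhuis_apply] using LinearMap.congr_fun₂ hN X Y⟩

/-- On the Lie algebra `M14₁` (`[x₁,x₃]=x₄, [x₁,x₄]=x₆, [x₂,x₃]=x₅, [x₂,x₅]=x₆`),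
for `ε = ±1` the map `J_ε` is an integrable almost complex structure. -/
theorem M14pos1_Jeps_integrable
    (L : Type*) [LieRing L] [LieAlgebra ℝ L]
    (x : Module.Basis (Fin 6) ℝ L)
    (h02 : ⁅x 0, x 2⁆ = x 3) (h03 : ⁅x 0, x 3⁆ = x 5)
    (h12 : ⁅x 1, x 2⁆ = x 4) (h14 : ⁅x 1, x 4⁆ = x 5)
    (h01 : ⁅x 0, x 1⁆ = 0) (h04 : ⁅x 0, x 4⁆ = 0) (h05 : ⁅x 0, x 5⁆ = 0)
    (h13 : ⁅x 1, x 3⁆ = 0) (h15 : ⁅x 1, x 5⁆ = 0)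
    (h23 : ⁅x 2, x 3⁆ = 0) (h24 : ⁅x 2, x 4⁆ = 0) (h25 : ⁅x 2, x 5⁆ = 0)
    (h34 : ⁅x 3, x 4⁆ = 0) (h35 : ⁅x 3, x 5⁆ = 0) (h45 : ⁅x 4, x 5⁆ = 0)
    (ε : ℝ) (hε : ε = 1 ∨ ε = -1)
    (J : L →ₗ[ℝ] L)
    (hJ0 : J (x 0) = x 1) (hJ1 : J (x 1) = -x 0)
    (hJ2 : J (x 2) = -(1 / ε) • x 5) (hJ5 : J (x 5) = ε • x 2)
    (hJ3 : J (x 3) = x 4) (hJ4 : J (x 4) = -x 3) :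
    (∀ X : L, J (J X) = -X) ∧
    (∀ X Y : L, ⁅J X, J Y⁆ - ⁅X, Y⁆ - J ⁅J X, Y⁆ - J ⁅X, J Y⁆ = 0) :=
  M14pos1_Jeps_integrable_general L x h02 h03 h12 h14 h04 h05 h13 h15 h23 h24 h35 h45 ε hε J hJ0 hJ1
    hJ2 hJ5 hJ3 hJ4
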